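/- A real 10×10 block lower-triangular type II operator C = [[Mᵗ,0,0],[A,Ω,0],[B,D,M]] satisfies 2·rank(M) + rank(Ω) ≤ rank(C) ≤ min{rank(M)+7, rank(Ω)+6}. If moreover A = 0, B = 0, D = 0 (type D), then rank(C) = 2·rank(M) + rank(Ω). -/

import Mathlib

open Matrix

/-- Bivector index type: 3+4+3 block decomposition `U ⊕ W ⊕ V'`. -/
abbrev BivIdx := Fin 3 ⊕ Fin 4 ⊕ Fin 3

/-- Type II block lower-triangular operator `[[Mᵗ,0,0],[A,Ω,0],[B,D,M]]`. -/
def typeIIOp (M : Matrix (Fin 3) (Fin 3) ℝ) (Om : Matrix (Fin 4) (Fin 4) ℝ)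
    (A : Matrix (Fin 4) (Fin 3) ℝ) (B : Matrix (Fin 3) (Fin 3) ℝ)
    (D : Matrix (Fin 3) (Fin 4) ℝ) : Matrix BivIdx BivIdx ℝ :=
  Matrix.of fun i j =>
    match i, j with
    | Sum.inl a, Sum.inl b => Mᵀ a b
    | Sum.inr (Sum.inl a), Sum.inl b => A a b
    | Sum.inr (Sum.inl a), Sum.inr (Sum.inl b) => Om a b
    | Sum.inr (Sum.inr a), Sum.inl b => B a b
    | Sum.inr (Sum.inr a), Sum.inr (Sum.inl b) => D a b
    | Sum.inr (Sum.inr a), Sum.inr (Sum.inr b) => M a b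
    | _, _ => 0

/-! Regrouping the indices as `U ⊕ (W ⊕ V')` exhibits `C` as block lower triangular twice over:
`C = [[Mᵀ, 0], [*, L]]` with `L = [[Ω, 0], [D, M]]`. The image of `[[P, 0], [Q, R]]` projects onto
the image of `P` and contains the image of `R` inside the kernel of that projection, so its rank is
at least `rank P + rank R`; this gives the lower bound. For the upper bounds, every column (or row)
outside the blocks `M` resp. `Ω` adds at most one to the rank. With `A = B = D = 0` the matrix is
block diagonal, and the rank is additive. -/

open Module

theorem Submodule.finrank_map_add_finrank_le {K V W : Type*} [DivisionRing K] [AddCommGroup V]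
    [Module K V] [AddCommGroup W] [Module K W] (f : V →ₗ[K] W) {U S : Submodule K V}
    [FiniteDimensional K U] (hSU : S ≤ U) (hS : S ≤ LinearMap.ker f) :
    finrank K (U.map f) + finrank K S ≤ finrank K U := by
  rw [← LinearMap.finrank_range_add_finrank_ker (f.domRestrict U), LinearMap.range_domRestrict,
    LinearMap.ker_domRestrict, ← (Submodule.comapSubtypeEquivOfLe hSU).finrank_eq]
  exact Nat.add_le_add_left (Submodule.finrank_mono (Submodule.comap_mono hS)) _

namespace Matrix

variable {K : Type*} [Field K] {m m₁ m₂ n n₁ n₂ : Type*}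

theorem rank_fromCols_le [Fintype m] [Fintype n₁] [Fintype n₂] (X : Matrix m n₁ K)
    (Y : Matrix m n₂ K) : (fromCols X Y).rank ≤ X.rank + Y.rank := by
  have hcol : (fromCols X Y).col = Sum.elim X.col Y.col := by
    ext (j | j) i <;> rfl
  rw [rank_eq_finrank_span_cols (fromCols X Y), rank_eq_finrank_span_cols X,
    rank_eq_finrank_span_cols Y, hcol, Set.Sum.elim_range, Submodule.span_union]
  exact Submodule.finrank_add_le_finrank_add_finrank _ _

theorem rank_fromRows_le [Fintype m₁] [Fintype m₂] [Fintype n] (X : Matrix m₁ n K)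
    (Y : Matrix m₂ n K) : (fromRows X Y).rank ≤ X.rank + Y.rank := by
  rw [← rank_transpose, transpose_fromRows, ← rank_transpose X, ← rank_transpose Y]
  exact rank_fromCols_le _ _

theorem rank_fromRows_zero_left [Fintype m₁] [Fintype m₂] [Fintype n] (Y : Matrix m₂ n K) :
    (fromRows (0 : Matrix m₁ n K) Y).rank = Y.rank := by
  refine le_antisymm ?_ (rank_submatrix_le (fromRows (0 : Matrix m₁ n K) Y) Sum.inr id)
  simpa using rank_fromRows_le (0 : Matrix m₁ n K) Y

theorem rank_fromRows_zero_right [Fintype m₁] [Fintype m₂] [Fintype n] (X : Matrix m₁ n K) :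
    (fromRows X (0 : Matrix m₂ n K)).rank = X.rank := by
  refine le_antisymm ?_ (rank_submatrix_le (fromRows X (0 : Matrix m₂ n K)) Sum.inl id)
  simpa using rank_fromRows_le X (0 : Matrix m₂ n K)

theorem rank_fromCols_zero_right [Fintype m] [Fintype n₁] [Fintype n₂] (X : Matrix m n₁ K) :
    (fromCols X (0 : Matrix m n₂ K)).rank = X.rank := by
  refine le_antisymm ?_ (rank_submatrix_le (fromCols X (0 : Matrix m n₂ K)) id Sum.inl)
  simpa using rank_fromCols_le X (0 : Matrix m n₂ K)

theorem rank_fromBlocks_le_card_add_rank_fromRows [Fintype m₁] [Fintype m₂] [Fintype n₁]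
    [Fintype n₂] (P : Matrix m₁ n₁ K) (B : Matrix m₁ n₂ K) (Q : Matrix m₂ n₁ K)
    (S : Matrix m₂ n₂ K) :
    (fromBlocks P B Q S).rank ≤ Fintype.card n₁ + (fromRows B S).rank := by
  rw [← fromCols_fromRows_eq_fromBlocks]
  exact (rank_fromCols_le _ _).trans (Nat.add_le_add_right (rank_le_card_width _) _)

theorem rank_fromBlocks_le_rank_fromCols_add_card [Fintype m₁] [Fintype m₂] [Fintype n₁]
    [Fintype n₂] (P : Matrix m₁ n₁ K) (B : Matrix m₁ n₂ K) (Q : Matrix m₂ n₁ K)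
    (S : Matrix m₂ n₂ K) :
    (fromBlocks P B Q S).rank ≤ (fromCols P B).rank + Fintype.card m₂ := by
  rw [← fromRows_fromCols_eq_fromBlocks]
  exact (rank_fromRows_le _ _).trans (Nat.add_le_add_left (rank_le_card_height _) _)

theorem add_rank_le_rank_fromBlocks_zero₁₂ [Fintype m₁] [Fintype m₂] [Fintype n₁] [Fintype n₂]
    (P : Matrix m₁ n₁ K) (Q : Matrix m₂ n₁ K) (R : Matrix m₂ n₂ K) :
    P.rank + R.rank ≤ (fromBlocks P 0 Q R).rank := by
  set C := fromBlocks P 0 Q R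
  let π : (m₁ ⊕ m₂ → K) →ₗ[K] m₁ → K := LinearMap.funLeft K K Sum.inl
  have hP : LinearMap.range P.mulVecLin ≤ (LinearMap.range C.mulVecLin).map π := by
    rintro _ ⟨x, rfl⟩
    refine ⟨C *ᵥ Sum.elim x 0, ⟨_, rfl⟩, ?_⟩
    ext i
    simp [C, π, fromBlocks_mulVec]
  have hR : LinearMap.range (fromRows 0 R).mulVecLin ≤ LinearMap.range C.mulVecLin := by
    rintro _ ⟨x, rfl⟩
    refine ⟨Sum.elim 0 x, ?_⟩
    ext (i | i) <;> simp [C, fromBlocks_mulVec]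
  have hker : LinearMap.range (fromRows (0 : Matrix m₁ n₂ K) R).mulVecLin ≤ LinearMap.ker π := by
    rintro _ ⟨x, rfl⟩
    ext i
    simp [π]
  calc P.rank + R.rank = P.rank + (fromRows (0 : Matrix m₁ n₂ K) R).rank := by
        rw [rank_fromRows_zero_left]
    _ ≤ finrank K ((LinearMap.range C.mulVecLin).map π) + (fromRows 0 R).rank :=
        Nat.add_le_add_right (Submodule.finrank_mono hP) _
    _ ≤ C.rank := Submodule.finrank_map_add_finrank_le π hR hker

theorem rank_fromBlocks_zero₁₂_zero₂₁ [Fintype m₁] [Fintype m₂] [Fintype n₁] [Fintype n₂]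
    (P : Matrix m₁ n₁ K) (R : Matrix m₂ n₂ K) : (fromBlocks P 0 0 R).rank = P.rank + R.rank := by
  refine le_antisymm ?_ (add_rank_le_rank_fromBlocks_zero₁₂ P 0 R)
  rw [← fromCols_fromRows_eq_fromBlocks]
  refine (rank_fromCols_le _ _).trans ?_
  rw [rank_fromRows_zero_right, rank_fromRows_zero_left]

end Matrix

theorem typeIIOp_eq_fromBlocks (M : Matrix (Fin 3) (Fin 3) ℝ) (Om : Matrix (Fin 4) (Fin 4) ℝ)
    (A : Matrix (Fin 4) (Fin 3) ℝ) (B : Matrix (Fin 3) (Fin 3) ℝ) (D : Matrix (Fin 3) (Fin 4) ℝ) :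
    typeIIOp M Om A B D = fromBlocks Mᵀ 0 (fromRows A B) (fromBlocks Om 0 D M) := by
  ext (i | i | i) (j | j | j) <;> rfl

/-- `2 rank M + rank Ω ≤ rank C ≤ min(rank M + 7, rank Ω + 6)`, with equality
`rank C = 2 rank M + rank Ω` in the type D case `A = B = D = 0`. -/
theorem stmt15 (M : Matrix (Fin 3) (Fin 3) ℝ) (Om : Matrix (Fin 4) (Fin 4) ℝ)
    (A : Matrix (Fin 4) (Fin 3) ℝ) (B : Matrix (Fin 3) (Fin 3) ℝ)
    (D : Matrix (Fin 3) (Fin 4) ℝ) :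
    2 * M.rank + Om.rank ≤ (typeIIOp M Om A B D).rank ∧
    (typeIIOp M Om A B D).rank ≤ min (M.rank + 7) (Om.rank + 6) ∧
    (A = 0 → B = 0 → D = 0 →
      (typeIIOp M Om A B D).rank = 2 * M.rank + Om.rank) := by
  rw [typeIIOp_eq_fromBlocks]
  have hL_ge : Om.rank + M.rank ≤ (fromBlocks Om 0 D M).rank :=
    add_rank_le_rank_fromBlocks_zero₁₂ Om D M
  have hL_le_M : (fromBlocks Om 0 D M).rank ≤ 4 + M.rank := by
    simpa [rank_fromRows_zero_left] using rank_fromBlocks_le_card_add_rank_fromRows Om 0 D M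
  have hL_le_Om : (fromBlocks Om 0 D M).rank ≤ Om.rank + 3 := by
    simpa [rank_fromCols_zero_right] using rank_fromBlocks_le_rank_fromCols_add_card Om 0 D M
  have hC_ge : M.rank + (fromBlocks Om 0 D M).rank ≤
      (fromBlocks Mᵀ 0 (fromRows A B) (fromBlocks Om 0 D M)).rank := by
    simpa [rank_transpose] using add_rank_le_rank_fromBlocks_zero₁₂ Mᵀ (fromRows A B) _
  have hC_le : (fromBlocks Mᵀ 0 (fromRows A B) (fromBlocks Om 0 D M)).rank ≤
      3 + (fromBlocks Om 0 D M).rank := by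
    simpa [rank_fromRows_zero_left] using
      rank_fromBlocks_le_card_add_rank_fromRows Mᵀ 0 (fromRows A B) (fromBlocks Om 0 D M)
  refine ⟨by omega, le_min (by omega) (by omega), ?_⟩
  rintro rfl rfl rfl
  rw [fromRows_zero, rank_fromBlocks_zero₁₂_zero₂₁, rank_fromBlocks_zero₁₂_zero₂₁, rank_transpose]
  omega
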